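/- Let f(x) ∈ ℂ[x] be monic of degree ℓ > 0. Then f = A_ℓ if and only if f(x²) ≡ ((1+x)/2)^{ℓ+1} f(x) mod (1-x)^{ℓ+1}. -/

import Mathlib

open PowerSeries Polynomial

/-!
With `F(x) = ∑ n^ℓ xⁿ`, taking even parts gives `F(x) + F(-x) = 2^(ℓ+1) F(x²)`; multiplying by
`(1 - x²)^(ℓ+1)` turns this into `2^(ℓ+1) A(x²) = (1 + x)^(ℓ+1) A(x) + (1 - x)^(ℓ+1) A(-x)`, so
`A = A_ℓ` satisfies the congruence. The solutions of the congruence form a vector space, and the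
evaluation `e ↦ e(1)` is injective on its elements of degree `≤ ℓ`: if `e(1) = 0` and
`e = (1 - x)^j g` with `0 < j ≤ ℓ`, reducing the congruence modulo `(1 - x)^(j+1)` leaves
`(2^j - 1) g(1) = 0`, so `(1 - x)^(ℓ+1)` divides `e` and `e = 0`. The solutions of degree `≤ ℓ`
therefore span at most a line, and `A` (degree `ℓ`, leading coefficient `1` since its
coefficients are truncated `(ℓ+1)`-st finite differences of `x ↦ x^ℓ`) is the only monic
solution of degree `ℓ`.
-/

open Finset

section CommRing

variable {R : Type*} [CommRing R]

theorem Polynomial.toPowerSeries_comp_neg_X (p : R[X]) :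
    ((p.comp (-X) : R[X]) : R⟦X⟧) = rescale (-1) (p : R⟦X⟧) := by
  have h : coeToPowerSeries.ringHom.comp (compRingHom (-X : R[X])) =
      (rescale (-1 : R)).comp coeToPowerSeries.ringHom :=
    Polynomial.ringHom_ext (fun a => by ext (_ | _) <;> simp [coeff_rescale]) (by simp)
  exact RingHom.congr_fun h p

theorem Polynomial.toPowerSeries_expand (p : ℕ) (hp : p ≠ 0) (f : R[X]) :
    ((expand R p f : R[X]) : R⟦X⟧) = PowerSeries.expand p hp (f : R⟦X⟧) := by
  ext n
  simp [Polynomial.coeff_expand (Nat.pos_of_ne_zero hp), PowerSeries.coeff_expand]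

theorem PowerSeries.coeff_one_sub_X_pow (m k : ℕ) :
    coeff k ((1 - X : R⟦X⟧) ^ m) = (-1) ^ k * m.choose k := by
  have h : (1 - X : R⟦X⟧) ^ m = rescale (-1) ((Polynomial.X + 1 : R[X]) ^ m : R[X]) := by
    simp [map_pow, sub_eq_neg_add, add_comm]
  rw [h, coeff_rescale, Polynomial.coeff_coe, coeff_X_add_one_pow]

theorem PowerSeries.mk_pow_add_rescale_neg_one (ℓ : ℕ) :
    mk (fun n => (n : R) ^ ℓ) + rescale (-1) (mk fun n => (n : R) ^ ℓ) =
      2 ^ (ℓ + 1) * PowerSeries.expand 2 two_ne_zero (mk fun n => (n : R) ^ ℓ) := by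
  ext n
  rw [← map_ofNat C, ← map_pow, map_add, coeff_rescale, coeff_C_mul, PowerSeries.coeff_expand,
    coeff_mk]
  rcases Nat.even_or_odd' n with ⟨m, rfl | rfl⟩
  · rw [if_pos (dvd_mul_right 2 m), Nat.mul_div_cancel_left m two_pos,
      (even_two_mul m).neg_one_pow, coeff_mk]
    push_cast
    ring
  · rw [if_neg (by omega), Odd.neg_one_pow ⟨m, rfl⟩]
    ring

theorem Polynomial.sum_range_neg_one_pow_mul_choose_mul_eval_eq_zero {P : R[X]} {n : ℕ}
    (hP : P.natDegree < n) :
    ∑ j ∈ range (n + 1), (-1 : R) ^ j * n.choose j * P.eval (j : R) = 0 := by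
  have h := congr_fun (fwdDiff_iter_eq_zero_of_degree_lt hP) 0
  rw [fwdDiff_iter_eq_sum_shift] at h
  calc ∑ j ∈ range (n + 1), (-1 : R) ^ j * n.choose j * P.eval (j : R)
      = (-1) ^ n * ∑ j ∈ range (n + 1),
          (((-1 : ℤ) ^ (n - j) * n.choose j) • P.eval (0 + j • (1 : R))) := by
        rw [mul_sum]
        refine sum_congr rfl fun j hj => ?_
        obtain ⟨k, rfl⟩ := Nat.exists_eq_add_of_le (Nat.lt_succ_iff.mp (mem_range.mp hj))
        have hk : ((-1 : R) ^ k) ^ 2 = 1 := by rw [← pow_mul, pow_mul', neg_one_sq, one_pow]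
        rw [Nat.add_sub_cancel_left, zsmul_eq_mul, zero_add, nsmul_one]
        push_cast
        linear_combination (-((-1 : R) ^ j * (j + k).choose j * P.eval (j : R))) * hk
    _ = 0 := by rw [h, Pi.zero_apply, mul_zero]

theorem Polynomial.one_sub_X_dvd_iff {p : R[X]} : 1 - Polynomial.X ∣ p ↔ p.eval 1 = 0 := by
  rw [← neg_sub, neg_dvd, ← Polynomial.C_1, dvd_iff_isRoot, IsRoot.def]

theorem Polynomial.natDegree_one_sub_X [Nontrivial R] :
    (1 - Polynomial.X : R[X]).natDegree = 1 := by
  rw [← neg_sub, natDegree_neg, ← Polynomial.C_1, natDegree_X_sub_C]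

end CommRing

def IsEulerianPolynomial {R : Type*} [CommRing R] (ℓ : ℕ) (A : R[X]) : Prop :=
  (A : R⟦X⟧) = (1 - PowerSeries.X) ^ (ℓ + 1) * PowerSeries.mk fun n => (n : R) ^ ℓ

namespace IsEulerianPolynomial

variable {R : Type*} [CommRing R] {ℓ : ℕ} {A : R[X]} (hA : IsEulerianPolynomial ℓ A)
include hA

theorem coeff_eq_sum (k : ℕ) :
    A.coeff k = ∑ j ∈ range (k + 1), (-1 : R) ^ j * (ℓ + 1).choose j * ((k : R) - j) ^ ℓ := by
  rw [← Polynomial.coeff_coe, hA, PowerSeries.coeff_mul, Nat.sum_antidiagonal_eq_sum_range_succ_mk]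
  refine sum_congr rfl fun j hj => ?_
  rw [coeff_one_sub_X_pow, coeff_mk, Nat.cast_sub (Nat.lt_succ_iff.mp (mem_range.mp hj))]

theorem coeff_eq_zero_of_lt {k : ℕ} (hk : ℓ < k) : A.coeff k = 0 := by
  have hsub : range (ℓ + 2) ⊆ range (k + 1) := range_subset_range.mpr (by omega)
  rw [hA.coeff_eq_sum, ← sum_subset hsub fun j hj hj' => by
    rw [Nat.choose_eq_zero_of_lt (by simp only [mem_range] at hj hj'; omega)]; simp]
  have h := sum_range_neg_one_pow_mul_choose_mul_eval_eq_zero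
    (P := (Polynomial.C (k : R) - Polynomial.X) ^ ℓ) (n := ℓ + 1) (by compute_degree; omega)
  simp only [eval_pow, eval_sub, eval_C, eval_X] at h
  exact h

theorem coeff_self : A.coeff ℓ = 1 := by
  have h := sum_range_neg_one_pow_mul_choose_mul_eval_eq_zero
    (P := (Polynomial.C (ℓ : R) - Polynomial.X) ^ ℓ) (n := ℓ + 1) (by compute_degree; omega)
  rw [sum_range_succ] at h
  simp only [eval_pow, eval_sub, eval_C, eval_X, Nat.choose_self, Nat.cast_one, mul_one] at h
  push_cast at h
  have hlast : (-1 : R) ^ (ℓ + 1) * ((ℓ : R) - (ℓ + 1)) ^ ℓ = -1 := by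
    rw [sub_add_cancel_left, pow_succ, mul_right_comm, ← mul_pow, neg_one_mul, neg_neg, one_pow,
      one_mul]
  rw [hA.coeff_eq_sum]
  linear_combination h - hlast

theorem natDegree_le : A.natDegree ≤ ℓ :=
  natDegree_le_iff_coeff_eq_zero.mpr fun _ hk => hA.coeff_eq_zero_of_lt hk

theorem two_pow_mul_expand :
    2 ^ (ℓ + 1) * expand R 2 A =
      (1 + Polynomial.X) ^ (ℓ + 1) * A + (1 - Polynomial.X) ^ (ℓ + 1) * A.comp (-Polynomial.X) := by
  rw [← Polynomial.coe_inj]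
  push_cast
  rw [show ((2 : R[X]) : R⟦X⟧) = 2 from map_ofNat coeToPowerSeries.ringHom 2,
    toPowerSeries_expand 2 two_ne_zero, toPowerSeries_comp_neg_X, hA]
  simp only [map_mul, map_pow, map_sub, map_one, PowerSeries.expand_X, rescale_neg_one_X]
  rw [show (1 - PowerSeries.X ^ 2 : R⟦X⟧) = (1 - PowerSeries.X) * (1 + PowerSeries.X) by ring,
    mul_pow]
  linear_combination (-(1 - PowerSeries.X) ^ (ℓ + 1) * (1 + PowerSeries.X) ^ (ℓ + 1)) *
    mk_pow_add_rescale_neg_one (R := R) ℓ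

end IsEulerianPolynomial

section Congruence

variable (K : Type*) [Field K]

noncomputable def eulerianCongruence (ℓ : ℕ) : Submodule K K[X] where
  carrier := {f | (1 - Polynomial.X) ^ (ℓ + 1) ∣
    f.comp (Polynomial.X ^ 2) - (Polynomial.C (2 : K)⁻¹ * (1 + Polynomial.X)) ^ (ℓ + 1) * f}
  add_mem' {f g} hf hg := by
    rw [Set.mem_ofPred_eq, add_comp]
    convert dvd_add hf hg using 1
    ring
  zero_mem' := by simp
  smul_mem' c f hf := by
    rw [Set.mem_ofPred_eq, Polynomial.smul_eq_C_mul, mul_comp, C_comp]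
    convert hf.mul_left (Polynomial.C c) using 1
    ring

variable {K}

theorem mem_eulerianCongruence {ℓ : ℕ} {f : K[X]} :
    f ∈ eulerianCongruence K ℓ ↔ (1 - Polynomial.X) ^ (ℓ + 1) ∣
      f.comp (Polynomial.X ^ 2) - (Polynomial.C (2 : K)⁻¹ * (1 + Polynomial.X)) ^ (ℓ + 1) * f :=
  Iff.rfl

theorem eval_one_eq_zero_of_one_sub_X_pow_mul_mem_eulerianCongruence [CharZero K] {ℓ j : ℕ}
    (hj : j ≠ 0) (hjℓ : j ≤ ℓ) {g : K[X]}
    (hg : (1 - Polynomial.X) ^ j * g ∈ eulerianCongruence K ℓ) : g.eval 1 = 0 := by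
  set c := Polynomial.C (2 : K)⁻¹ * (1 + Polynomial.X)
  set q := (1 + Polynomial.X) ^ j * g.comp (Polynomial.X ^ 2) - c ^ (ℓ + 1) * g
  have hsplit : ((1 - Polynomial.X) ^ j * g).comp (Polynomial.X ^ 2) - c ^ (ℓ + 1) *
      ((1 - Polynomial.X) ^ j * g) = (1 - Polynomial.X) ^ j * q := by
    simp only [q, mul_comp, pow_comp, sub_comp, one_comp, X_comp]
    rw [show (1 - Polynomial.X ^ 2 : K[X]) = (1 - Polynomial.X) * (1 + Polynomial.X) by ring,
      mul_pow]
    ring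
  have hne : (1 - Polynomial.X : K[X]) ≠ 0 :=
    ne_zero_of_natDegree_gt (n := 0) (by rw [natDegree_one_sub_X]; exact one_pos)
  have hq : 1 - Polynomial.X ∣ q := by
    rw [mem_eulerianCongruence, hsplit, ← Nat.add_sub_of_le (by omega : j ≤ ℓ + 1), pow_add,
      mul_dvd_mul_iff_left (pow_ne_zero _ hne)] at hg
    exact (dvd_pow_self _ (by omega)).trans hg
  have hq1 : ((2 : K) ^ j - 1) * g.eval 1 = 0 := by
    rw [one_sub_X_dvd_iff] at hq
    simp only [q, c, eval_sub, eval_mul, eval_pow, eval_add, eval_one, eval_X, eval_comp, one_pow,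
      eval_C] at hq
    linear_combination hq
  refine (mul_eq_zero.mp hq1).resolve_left (sub_ne_zero.mpr ?_)
  exact_mod_cast (Nat.one_lt_two_pow hj).ne'

theorem one_sub_X_pow_dvd_of_mem_eulerianCongruence [CharZero K] {ℓ : ℕ} {e : K[X]}
    (he : e ∈ eulerianCongruence K ℓ) (he1 : e.eval 1 = 0) {j : ℕ} (hj : j ≤ ℓ + 1) :
    (1 - Polynomial.X) ^ j ∣ e := by
  induction j with
  | zero => exact one_dvd e
  | succ j ih =>
    obtain ⟨g, rfl⟩ := ih (by omega)
    rw [pow_succ]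
    refine mul_dvd_mul_left _ (one_sub_X_dvd_iff.mpr ?_)
    rcases Nat.eq_zero_or_pos j with rfl | hj0
    · simpa using he1
    · exact eval_one_eq_zero_of_one_sub_X_pow_mul_mem_eulerianCongruence hj0.ne' (by omega) he

theorem eq_zero_of_mem_eulerianCongruence [CharZero K] {ℓ : ℕ} {e : K[X]}
    (he : e ∈ eulerianCongruence K ℓ) (hdeg : e.natDegree ≤ ℓ) (he1 : e.eval 1 = 0) : e = 0 := by
  refine eq_zero_of_dvd_of_natDegree_lt
    (one_sub_X_pow_dvd_of_mem_eulerianCongruence he he1 le_rfl) ?_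
  rw [natDegree_pow, natDegree_one_sub_X]
  omega

theorem eval_one_smul_eq_eval_one_smul_of_mem_eulerianCongruence [CharZero K] {ℓ : ℕ}
    {e p : K[X]} (he : e ∈ eulerianCongruence K ℓ) (hp : p ∈ eulerianCongruence K ℓ)
    (hedeg : e.natDegree ≤ ℓ) (hpdeg : p.natDegree ≤ ℓ) : e.eval 1 • p = p.eval 1 • e := by
  refine sub_eq_zero.mp (eq_zero_of_mem_eulerianCongruence
    (sub_mem (Submodule.smul_mem _ _ hp) (Submodule.smul_mem _ _ he)) ?_ ?_)
  · exact natDegree_sub_le_of_le ((natDegree_smul_le _ _).trans hpdeg)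
      ((natDegree_smul_le _ _).trans hedeg) |>.trans_eq (max_self ℓ)
  · simp only [eval_sub, eval_smul, smul_eq_mul]
    ring

theorem eq_of_mem_eulerianCongruence [CharZero K] {ℓ : ℕ} {f g : K[X]}
    (hf : f ∈ eulerianCongruence K ℓ) (hg : g ∈ eulerianCongruence K ℓ)
    (hfdeg : f.natDegree ≤ ℓ) (hgdeg : g.natDegree ≤ ℓ) (hcoeff : f.coeff ℓ = g.coeff ℓ)
    (hg0 : g.coeff ℓ ≠ 0) : f = g := by
  have hdeg : (f - g).natDegree ≤ ℓ :=
    (natDegree_sub_le_of_le hfdeg hgdeg).trans_eq (max_self ℓ)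
  have hsmul := congrArg (Polynomial.coeff · ℓ)
    (eval_one_smul_eq_eval_one_smul_of_mem_eulerianCongruence (sub_mem hf hg) hg hdeg hgdeg)
  simp only [Polynomial.coeff_smul, coeff_sub, hcoeff, sub_self, smul_eq_mul, mul_zero] at hsmul
  exact sub_eq_zero.mp (eq_zero_of_mem_eulerianCongruence (sub_mem hf hg) hdeg
    ((mul_eq_zero.mp hsmul).resolve_right hg0))

theorem IsEulerianPolynomial.mem_eulerianCongruence [CharZero K] {ℓ : ℕ} {A : K[X]}
    (hA : IsEulerianPolynomial ℓ A) : A ∈ eulerianCongruence K ℓ := by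
  refine ⟨Polynomial.C (2 : K)⁻¹ ^ (ℓ + 1) * A.comp (-Polynomial.X), ?_⟩
  have h := hA.two_pow_mul_expand
  have h2 : Polynomial.C (2 : K)⁻¹ ^ (ℓ + 1) * 2 ^ (ℓ + 1) = 1 := by
    rw [← mul_pow, ← Polynomial.C_ofNat, ← Polynomial.C_mul, inv_mul_cancel₀ two_ne_zero, map_one,
      one_pow]
  rw [expand_eq_comp_X_pow] at h
  rw [mul_pow]
  linear_combination Polynomial.C (2 : K)⁻¹ ^ (ℓ + 1) * h - A.comp (Polynomial.X ^ 2) * h2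

end Congruence

theorem eulerian_characterization_m2_general (ℓ : ℕ) (f : Polynomial ℂ)
    (hmonic : f.Monic) (hdeg : f.natDegree = ℓ)
    (A : Polynomial ℂ)
    (hA : (A : PowerSeries ℂ) =
      (1 - PowerSeries.X) ^ (ℓ + 1) * PowerSeries.mk (fun n => (n : ℂ) ^ ℓ)) :
    f = A ↔
      (1 - Polynomial.X) ^ (ℓ + 1) ∣
        f.comp (Polynomial.X ^ 2) -
          (Polynomial.C ((2 : ℂ))⁻¹ * (1 + Polynomial.X)) ^ (ℓ + 1) * f := by
  have hEulerian : IsEulerianPolynomial ℓ A := hA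
  have hAmem := hEulerian.mem_eulerianCongruence
  have hAℓ := hEulerian.coeff_self
  refine ⟨fun hfA => hfA ▸ hAmem, fun hf => eq_of_mem_eulerianCongruence hf hAmem hdeg.le
    hEulerian.natDegree_le ?_ (hAℓ ▸ one_ne_zero)⟩
  rw [hAℓ, ← hdeg]
  exact hmonic.coeff_natDegree

/-- A monic `f ∈ ℂ[x]` of degree `ℓ > 0` equals the Eulerian polynomial `A_ℓ`
if and only if `f(x²) ≡ ((1+x)/2)^{ℓ+1}·f(x) mod (1-x)^{ℓ+1}`. -/
theorem eulerian_characterization_m2 (ℓ : ℕ) (hℓ : 0 < ℓ) (f : Polynomial ℂ)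
    (hmonic : f.Monic) (hdeg : f.natDegree = ℓ)
    (A : Polynomial ℂ)
    (hA : (A : PowerSeries ℂ) =
      (1 - PowerSeries.X) ^ (ℓ + 1) * PowerSeries.mk (fun n => (n : ℂ) ^ ℓ)) :
    f = A ↔
      (1 - Polynomial.X) ^ (ℓ + 1) ∣
        f.comp (Polynomial.X ^ 2) -
          (Polynomial.C ((2 : ℂ))⁻¹ * (1 + Polynomial.X)) ^ (ℓ + 1) * f :=
  eulerian_characterization_m2_general ℓ f hmonic hdeg A hA
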